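/- Let f : ℝ^d → ℝ be L-smooth, λ > 0, and u uniform on √d · S^{d-1}. Then E_u[‖g_λ(x)‖²] ≤ 2d · ‖∇f(x)‖² + (L²/2) λ² d³, where g_λ(x) = ((f(x+λu) − f(x−λu))/(2λ)) u. -/

import Mathlib

/-!
Because `∇f` is `L`-Lipschitz, `|f (x + v) - f x - ⟪∇f x, v⟫| ≤ L/2 ‖v‖²`; applied at `±λu`
this puts the central difference quotient within `L|λ|‖u‖²/2` of `⟪∇f x, u⟫`, and
`(a + b)² ≤ 2a² + 2b²` bounds `‖g_λ(x)‖²` pointwise by `‖u‖² (2⟪∇f x, u⟫² + L²λ²‖u‖⁴/2)`.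

For a rotation-invariant probability measure on the sphere of radius `r` in an `n`-dimensional
space, `∫ ⟪v, u⟫²` depends only on `‖v‖` (a reflection maps any vector to any other of the same
norm), and summing over an orthonormal basis (Parseval) gives `n ∫ ⟪v, u⟫² = ‖v‖² r²`.
With `r² = n = d` the pointwise bound integrates to the claim.
-/

open MeasureTheory

noncomputable section

/-- `μ` is the uniform distribution on the sphere of radius `r` in `ℝ^n`. -/
def IsUniformSphere {n : ℕ} (μ : Measure (EuclideanSpace ℝ (Fin n))) (r : ℝ) : Prop :=
  IsProbabilityMeasure μ ∧ (∀ᵐ u ∂μ, ‖u‖ = r) ∧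
    ∀ O : EuclideanSpace ℝ (Fin n) ≃ₗᵢ[ℝ] EuclideanSpace ℝ (Fin n), μ.map O = μ

open Module
open scoped RealInnerProductSpace

def twoPointEstimator {E : Type*} [AddCommGroup E] [Module ℝ E] (f : E → ℝ) (lam : ℝ)
    (x u : E) : E :=
  ((f (x + lam • u) - f (x - lam • u)) / (2 * lam)) • u

section Smooth

variable {E : Type*} [NormedAddCommGroup E] [InnerProductSpace ℝ E] [CompleteSpace E]
  {f : E → ℝ} {L : ℝ}

theorem abs_sub_sub_inner_gradient_le (hf : Differentiable ℝ f)
    (hL : ∀ x y, ‖gradient f x - gradient f y‖ ≤ L * ‖x - y‖) (x v : E) :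
    |f (x + v) - f x - ⟪gradient f x, v⟫| ≤ L / 2 * ‖v‖ ^ 2 := by
  have hφ : ∀ t : ℝ, HasDerivAt (fun s : ℝ => f (x + s • v) - f x - s * ⟪gradient f x, v⟫)
      (⟪gradient f (x + t • v) - gradient f x, v⟫) t := by
    intro t
    have hline : HasDerivAt (fun s : ℝ => x + s • v) v t := by
      simpa using ((hasDerivAt_id t).smul_const v).const_add x
    exact ((((hf _).hasGradientAt.hasFDerivAt.comp_hasDerivAt t hline).sub_const (f x)).sub
      ((hasDerivAt_id t).mul_const ⟪gradient f x, v⟫)).congr_deriv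
      (by rw [InnerProductSpace.toDual_apply_apply, inner_sub_left, one_mul])
  have hB : ∀ t : ℝ, HasDerivAt (fun s : ℝ => L / 2 * ‖v‖ ^ 2 * s ^ 2) (L * ‖v‖ ^ 2 * t) t :=
    fun t => ((hasDerivAt_pow 2 t).const_mul (L / 2 * ‖v‖ ^ 2)).congr_deriv (by simp; ring)
  have hslope : ∀ t ∈ Set.Ico (0 : ℝ) 1,
      ‖⟪gradient f (x + t • v) - gradient f x, v⟫‖ ≤ L * ‖v‖ ^ 2 * t := by
    rintro t ⟨ht, -⟩
    calc ‖⟪gradient f (x + t • v) - gradient f x, v⟫‖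
        ≤ ‖gradient f (x + t • v) - gradient f x‖ * ‖v‖ := norm_inner_le_norm _ _
      _ ≤ L * ‖x + t • v - x‖ * ‖v‖ := by gcongr; exact hL _ _
      _ = L * ‖v‖ ^ 2 * t := by
        rw [add_sub_cancel_left, norm_smul, Real.norm_of_nonneg ht]; ring
  have hfence := image_norm_le_of_norm_deriv_right_le_deriv_boundary
    (fun t _ => (hφ t).continuousAt.continuousWithinAt) (fun t _ => (hφ t).hasDerivWithinAt)
    (by simp) hB hslope (Set.right_mem_Icc.mpr zero_le_one)
  simpa using hfence

theorem abs_central_difference_sub_inner_gradient_le (hf : Differentiable ℝ f)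
    (hL : ∀ x y, ‖gradient f x - gradient f y‖ ≤ L * ‖x - y‖) (x u : E) {lam : ℝ}
    (hlam : lam ≠ 0) :
    |(f (x + lam • u) - f (x - lam • u)) / (2 * lam) - ⟪gradient f x, u⟫|
      ≤ L / 2 * |lam| * ‖u‖ ^ 2 := by
  have hfwd := abs_sub_sub_inner_gradient_le hf hL x (lam • u)
  have hbwd := abs_sub_sub_inner_gradient_le hf hL x (-(lam • u))
  rw [norm_neg, ← sub_eq_add_neg, inner_neg_right] at hbwd
  rw [real_inner_smul_right, norm_smul, Real.norm_eq_abs] at hfwd hbwd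
  have hnum : |f (x + lam • u) - f (x - lam • u) - 2 * lam * ⟪gradient f x, u⟫|
      ≤ L * (|lam| * ‖u‖) ^ 2 := by
    calc _ = |(f (x + lam • u) - f x - lam * ⟪gradient f x, u⟫)
          - (f (x - lam • u) - f x - -(lam * ⟪gradient f x, u⟫))| := by ring_nf
      _ ≤ L / 2 * (|lam| * ‖u‖) ^ 2 + L / 2 * (|lam| * ‖u‖) ^ 2 :=
        (abs_sub _ _).trans (add_le_add hfwd hbwd)
      _ = _ := by ring
  have h2lam : 0 < |2 * lam| := by positivity
  rw [← mul_div_cancel_left₀ ⟪gradient f x, u⟫ (mul_ne_zero two_ne_zero hlam), ← sub_div,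
    abs_div, div_le_iff₀ h2lam]
  calc _ ≤ L * (|lam| * ‖u‖) ^ 2 := hnum
    _ = L / 2 * |lam| * ‖u‖ ^ 2 * |2 * lam| := by
      rw [abs_mul, abs_two]; ring

theorem norm_twoPointEstimator_sq_le (hf : Differentiable ℝ f)
    (hL : ∀ x y, ‖gradient f x - gradient f y‖ ≤ L * ‖x - y‖) (lam : ℝ) (x u : E) :
    ‖twoPointEstimator f lam x u‖ ^ 2
      ≤ ‖u‖ ^ 2 * (2 * ⟪gradient f x, u⟫ ^ 2 + L ^ 2 / 2 * lam ^ 2 * ‖u‖ ^ 4) := by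
  set q := (f (x + lam • u) - f (x - lam • u)) / (2 * lam)
  have hq : q ^ 2 ≤ 2 * ⟪gradient f x, u⟫ ^ 2 + L ^ 2 / 2 * lam ^ 2 * ‖u‖ ^ 4 := by
    rcases eq_or_ne lam 0 with rfl | hlam
    · simp [q] -- `a / 0 = 0`
      positivity
    obtain ⟨hlower, hupper⟩ :=
      abs_le.mp (abs_central_difference_sub_inner_gradient_le hf hL x u hlam)
    have herr_sq : (q - ⟪gradient f x, u⟫) ^ 2 ≤ (L / 2 * |lam| * ‖u‖ ^ 2) ^ 2 :=
      sq_le_sq' hlower hupper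
    calc q ^ 2 = (⟪gradient f x, u⟫ + (q - ⟪gradient f x, u⟫)) ^ 2 := by ring
      _ ≤ 2 * (⟪gradient f x, u⟫ ^ 2 + (q - ⟪gradient f x, u⟫) ^ 2) := add_sq_le
      _ ≤ 2 * (⟪gradient f x, u⟫ ^ 2 + (L / 2 * |lam| * ‖u‖ ^ 2) ^ 2) := by gcongr
      _ = _ := by rw [mul_pow, mul_pow, sq_abs]; ring
  rw [twoPointEstimator, norm_smul, mul_pow, Real.norm_eq_abs, sq_abs, mul_comm]
  gcongr

end Smooth

section IsometryInvariant

variable {E : Type*} [NormedAddCommGroup E] [InnerProductSpace ℝ E] [MeasurableSpace E]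
  [BorelSpace E] {μ : Measure E}

theorem integral_inner_sq_eq_of_norm_eq (hμ : ∀ O : E ≃ₗᵢ[ℝ] E, μ.map O = μ) {v w : E}
    (h : ‖v‖ = ‖w‖) : ∫ u, ⟪v, u⟫ ^ 2 ∂μ = ∫ u, ⟪w, u⟫ ^ 2 ∂μ := by
  set O := Submodule.reflection (ℝ ∙ (w - v))ᗮ
  have hO : O w = v := Submodule.reflection_sub h.symm
  calc ∫ u, ⟪v, u⟫ ^ 2 ∂μ = ∫ u, ⟪v, u⟫ ^ 2 ∂(μ.map O) := by rw [hμ]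
    _ = ∫ u, ⟪O w, O u⟫ ^ 2 ∂μ := by
      rw [integral_map O.continuous.aemeasurable (by fun_prop), hO]
    _ = ∫ u, ⟪w, u⟫ ^ 2 ∂μ := by simp_rw [LinearIsometryEquiv.inner_map_map]

theorem integrable_inner_sq [IsFiniteMeasure μ] {r : ℝ} (hr : ∀ᵐ u ∂μ, ‖u‖ = r) (v : E) :
    Integrable (fun u => ⟪v, u⟫ ^ 2) μ := by
  refine Integrable.of_bound (by fun_prop) ((‖v‖ * r) ^ 2) ?_
  filter_upwards [hr] with u hu
  obtain ⟨hlower, hupper⟩ := abs_le.mp (abs_real_inner_le_norm v u)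
  rw [Real.norm_of_nonneg (sq_nonneg _), ← hu]
  exact sq_le_sq' hlower hupper

theorem finrank_mul_integral_inner_sq [FiniteDimensional ℝ E] [IsFiniteMeasure μ]
    (hμ : ∀ O : E ≃ₗᵢ[ℝ] E, μ.map O = μ) {r : ℝ} (hr : ∀ᵐ u ∂μ, ‖u‖ = r) (v : E) :
    finrank ℝ E * ∫ u, ⟪v, u⟫ ^ 2 ∂μ = ‖v‖ ^ 2 * r ^ 2 * μ.real Set.univ := by
  let b := stdOrthonormalBasis ℝ E
  have hb : ∀ i, ∫ u, ⟪v, u⟫ ^ 2 ∂μ = ‖v‖ ^ 2 * ∫ u, ⟪b i, u⟫ ^ 2 ∂μ := fun i => by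
    rw [integral_inner_sq_eq_of_norm_eq hμ (w := ‖v‖ • b i) (by simp [norm_smul, b.norm_eq_one]),
      ← integral_const_mul]
    simp_rw [real_inner_smul_left, mul_pow]
  have hparseval : ∀ᵐ u ∂μ, ∑ i, ⟪b i, u⟫ ^ 2 = r ^ 2 :=
    hr.mono fun u hu => by rw [b.sum_sq_inner_right, hu]
  calc finrank ℝ E * ∫ u, ⟪v, u⟫ ^ 2 ∂μ = ∑ i, ‖v‖ ^ 2 * ∫ u, ⟪b i, u⟫ ^ 2 ∂μ := by
        simp [← hb]
    _ = ‖v‖ ^ 2 * ∫ u, ∑ i, ⟪b i, u⟫ ^ 2 ∂μ := by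
      rw [← Finset.mul_sum, integral_finsetSum _ fun i _ => integrable_inner_sq hr (b i)]
    _ = ‖v‖ ^ 2 * r ^ 2 * μ.real Set.univ := by
      rw [integral_congr_ae hparseval, integral_const, smul_eq_mul]; ring

end IsometryInvariant

theorem two_point_estimator_second_moment_general (d : ℕ) (L lam : ℝ)
    (f : EuclideanSpace ℝ (Fin d) → ℝ) (hf : Differentiable ℝ f)
    (hL : ∀ x y, ‖gradient f x - gradient f y‖ ≤ L * ‖x - y‖)
    (μ : Measure (EuclideanSpace ℝ (Fin d)))
    (hμ : IsUniformSphere μ (Real.sqrt d))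
    (x : EuclideanSpace ℝ (Fin d)) :
    (∫ u, ‖((f (x + lam • u) - f (x - lam • u)) / (2 * lam)) • u‖ ^ 2 ∂μ)
      ≤ 2 * d * ‖gradient f x‖ ^ 2 + L ^ 2 / 2 * lam ^ 2 * (d : ℝ) ^ 3 := by
  obtain ⟨_, hnorm, hinv⟩ := hμ
  have hnorm_sq : ∀ᵐ u ∂μ, ‖u‖ ^ 2 = d :=
    hnorm.mono fun u hu => by rw [hu, Real.sq_sqrt d.cast_nonneg]
  have hint := integrable_inner_sq hnorm (gradient f x)
  calc ∫ u, ‖twoPointEstimator f lam x u‖ ^ 2 ∂μ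
      ≤ ∫ u, d * (2 * ⟪gradient f x, u⟫ ^ 2 + L ^ 2 / 2 * lam ^ 2 * d ^ 2) ∂μ := by
        refine integral_mono_of_nonneg (.of_forall fun u => by positivity) (by fun_prop) ?_
        filter_upwards [hnorm_sq] with u hu
        have hbound := norm_twoPointEstimator_sq_le hf hL lam x u
        rwa [show ‖u‖ ^ 4 = (‖u‖ ^ 2) ^ 2 by ring, hu] at hbound
    _ = 2 * (d * ∫ u, ⟪gradient f x, u⟫ ^ 2 ∂μ) + L ^ 2 / 2 * lam ^ 2 * d ^ 3 := by
      rw [integral_const_mul, integral_add (hint.const_mul 2) (integrable_const _),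
        integral_const_mul, integral_const, probReal_univ]
      ring
    _ = 2 * d * ‖gradient f x‖ ^ 2 + L ^ 2 / 2 * lam ^ 2 * d ^ 3 := by
      have hmoment := finrank_mul_integral_inner_sq hinv hnorm (gradient f x)
      rw [finrank_euclideanSpace_fin, Real.sq_sqrt d.cast_nonneg, probReal_univ] at hmoment
      rw [hmoment]
      ring

/-- For an `L`-smooth `f` and `u` uniform on the sphere of radius `√d`, the
second moment of the two-point estimator satisfies
`E[‖g_λ(x)‖²] ≤ 2d‖∇f(x)‖² + (L²/2)λ²d³`. -/
theorem two_point_estimator_second_moment (d : ℕ) (hd : 1 ≤ d) (L lam : ℝ) (hlam : 0 < lam)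
    (f : EuclideanSpace ℝ (Fin d) → ℝ) (hf : Differentiable ℝ f)
    (hL : ∀ x y, ‖gradient f x - gradient f y‖ ≤ L * ‖x - y‖)
    (μ : Measure (EuclideanSpace ℝ (Fin d)))
    (hμ : IsUniformSphere μ (Real.sqrt d))
    (x : EuclideanSpace ℝ (Fin d)) :
    (∫ u, ‖((f (x + lam • u) - f (x - lam • u)) / (2 * lam)) • u‖ ^ 2 ∂μ)
      ≤ 2 * d * ‖gradient f x‖ ^ 2 + L ^ 2 / 2 * lam ^ 2 * (d : ℝ) ^ 3 :=
  two_point_estimator_second_moment_general d L lam f hf hL μ hμ x
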